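/- arXiv:1702.04678 — 2 statements merged into one kernel-verified Lean document; each statement's English description precedes it below -/
import Mathlib

section
/- Let U be a finite-dimensional complex normed vector space, A ∈ End(U), ρ, ρ' ∈ ℝ with ρ' < ρ, β < 0, N ∈ ℕ and C ≥ 0. Let E be the spectral projection of A associated to the set of eigenvalues μ of A with Re μ ≤ ρ'. Let Φ : [0,∞) → U be differentiable and ψ : [0,∞) → U continuous with Φ'(t) = A Φ(t) + ψ(t) and ‖ψ(t)‖ ≤ C (1+t)^N e^{(ρ+β)t} for all t ≥ 0. Then there exists C' > 0 such that ‖E Φ(t)‖ ≤ C' (1+t)^{N + dim U + 1} e^{max(ρ', ρ+β) t} for all t ≥ 0. -/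
/-!
`E` commutes with `A` and maps `U` into the sum `V` of the generalized eigenspaces with
`Re μ ≤ ρ'`, so `EΦ` solves `(EΦ)' = A(EΦ) + Eψ` and Duhamel's formula gives
`EΦ(t) = e^{tA} EΦ(0) + ∫₀ᵗ e^{(t-s)A} Eψ(s) ds`. On a generalized eigenvector for `μ` the
exponential series of `t(A - μ)` is a polynomial of degree `< dim U` in `t`, so every vector of `V`
has orbit `O((1+t)^{dim U} e^{ρ't})`; by the uniform boundedness principle the operators
`e^{tA} E` obey the same bound in norm. Inserting this and the bound on `ψ` into the convolution,
whose length `t` costs one more power of `1 + t`, gives the claim.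
-/

open Module NNReal NormedSpace Finset

namespace LinearMap

variable {R M : Type*} [Semiring R] [AddCommMonoid M] [Module R M] {V W : Submodule R M}
  {e : M →ₗ[R] M}

theorem apply_mem_of_sup_eq_top (hVW : V ⊔ W = ⊤) (he₁ : ∀ v ∈ V, e v = v)
    (he₀ : ∀ w ∈ W, e w = 0) (x : M) : e x ∈ V := by
  obtain ⟨v, hv, w, hw, rfl⟩ := Submodule.mem_sup.1 (hVW ▸ Submodule.mem_top : x ∈ V ⊔ W)
  rwa [map_add, he₁ v hv, he₀ w hw, add_zero]

theorem commute_apply_of_sup_eq_top (hVW : V ⊔ W = ⊤) (he₁ : ∀ v ∈ V, e v = v)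
    (he₀ : ∀ w ∈ W, e w = 0) {f : M →ₗ[R] M} (hfV : Set.MapsTo f V V) (hfW : Set.MapsTo f W W)
    (x : M) : e (f x) = f (e x) := by
  obtain ⟨v, hv, w, hw, rfl⟩ := Submodule.mem_sup.1 (hVW ▸ Submodule.mem_top : x ∈ V ⊔ W)
  rw [map_add, map_add, map_add, he₁ v hv, he₀ w hw, he₁ _ (hfV hv), he₀ _ (hfW hw), add_zero,
    add_zero]

end LinearMap

namespace Module.End

theorem mapsTo_biSup_maxGenEigenspace {R M : Type*} [CommRing R] [AddCommGroup M]
    [Module R M] (f : End R M) (S : Set R) :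
    Set.MapsTo f ↑(⨆ μ ∈ S, f.maxGenEigenspace μ) ↑(⨆ μ ∈ S, f.maxGenEigenspace μ) := by
  intro x hx
  refine (?_ : Submodule.map f _ ≤ _) (Submodule.mem_map_of_mem hx)
  simp only [Submodule.map_iSup]
  exact iSup₂_mono fun μ _ =>
    Submodule.map_le_iff_le_comap.2 (mapsTo_maxGenEigenspace_of_comm (Commute.refl f) μ)

variable {K V : Type*} [Field K] [AddCommGroup V] [Module K V] [FiniteDimensional K V]

theorem maxGenEigenspace_eq_bot_of_notMem_spectrum {f : End K V} {μ : K}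
    (hμ : μ ∉ spectrum K f) : f.maxGenEigenspace μ = ⊥ := by
  rwa [← hasUnifEigenvalue_iff_mem_spectrum,
    ← hasUnifEigenvalue_iff_hasUnifEigenvalue_one (k := ⊤) WithTop.top_pos, HasUnifEigenvalue,
    not_not] at hμ

theorem sup_biSup_maxGenEigenspace_eq_top [IsAlgClosed K] (f : End K V) (p : K → Prop) :
    (⨆ μ ∈ {μ | μ ∈ spectrum K f ∧ p μ}, f.maxGenEigenspace μ) ⊔
      (⨆ μ ∈ {μ | μ ∈ spectrum K f ∧ ¬ p μ}, f.maxGenEigenspace μ) = ⊤ := by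
  refine eq_top_iff.2 (f.iSup_maxGenEigenspace_eq_top ▸ iSup_le fun μ => ?_)
  by_cases hμ : μ ∈ spectrum K f
  · by_cases hp : p μ
    · exact le_sup_of_le_left (le_biSup _ (show μ ∈ {μ | μ ∈ spectrum K f ∧ p μ} from ⟨hμ, hp⟩))
    · exact le_sup_of_le_right (le_biSup _ (show μ ∈ {μ | μ ∈ spectrum K f ∧ ¬ p μ} from ⟨hμ, hp⟩))
  · simp [maxGenEigenspace_eq_bot_of_notMem_spectrum hμ]

end Module.End

theorem ContinuousLinearMap.ker_pow_finrank_sub_smul_one_eq_maxGenEigenspace {𝕜 U : Type*}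
    [NontriviallyNormedField 𝕜] [NormedAddCommGroup U] [NormedSpace 𝕜 U] [FiniteDimensional 𝕜 U]
    (A : U →L[𝕜] U) (μ : 𝕜) :
    LinearMap.ker (((A - μ • 1) ^ finrank 𝕜 U : U →L[𝕜] U) : U →ₗ[𝕜] U) =
      End.maxGenEigenspace (A : U →ₗ[𝕜] U) μ := by
  rw [End.maxGenEigenspace_eq_genEigenspace_finrank, End.genEigenspace_nat, toLinearMap_pow]
  rfl

section Exponential

variable {𝕂 𝔸 : Type*} [RCLike 𝕂] [NormedRing 𝔸] [NormedAlgebra 𝕂 𝔸] [CompleteSpace 𝔸]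

theorem exp_eq_exp_smul_exp_sub_algebraMap (a : 𝔸) (μ : 𝕂) :
    exp a = exp μ • exp (a - algebraMap 𝕂 𝔸 μ) := by
  let _ : NormedAlgebra ℚ 𝔸 := .restrictScalars ℚ 𝕂 𝔸
  conv_lhs => rw [← add_sub_cancel (algebraMap 𝕂 𝔸 μ) a]
  rw [exp_add_of_commute (Algebra.commutes μ _), ← algebraMap_exp_comm, Algebra.smul_def]

end Exponential

section Nilpotent

variable {𝕜 U : Type*} [RCLike 𝕜] [NormedAddCommGroup U] [NormedSpace 𝕜 U] [CompleteSpace U]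

theorem exp_apply_eq_sum_of_pow_apply_eq_zero {B : U →L[𝕜] U} {x : U} {d : ℕ}
    (hx : (B ^ d) x = 0) : exp B x = ∑ k ∈ range d, (k.factorial : 𝕜)⁻¹ • (B ^ k) x := by
  have hseries := (ContinuousLinearMap.apply 𝕜 U x).map_tsum (expSeries_summable' (𝕂 := 𝕜) B)
  simp only [ContinuousLinearMap.apply_apply, smul_apply] at hseries
  rw [congrFun (exp_eq_tsum 𝕜) B, hseries]
  refine tsum_eq_sum fun k hk => ?_
  obtain ⟨j, rfl⟩ := Nat.exists_eq_add_of_le' (not_lt.1 (mt mem_range.2 hk))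
  simp [pow_add, hx]

theorem norm_exp_apply_le_sum_of_pow_apply_eq_zero {B : U →L[𝕜] U} {x : U} {d : ℕ}
    (hx : (B ^ d) x = 0) : ‖exp B x‖ ≤ ∑ k ∈ range d, ‖(B ^ k) x‖ := by
  rw [exp_apply_eq_sum_of_pow_apply_eq_zero hx]
  refine (norm_sum_le _ _).trans (sum_le_sum fun k _ => ?_)
  rw [norm_smul]
  refine mul_le_of_le_one_left (norm_nonneg _) ?_
  simpa using inv_le_one_of_one_le₀ (Nat.one_le_cast.2 k.factorial_pos)

end Nilpotent

section Complex

variable {U : Type*} [NormedAddCommGroup U] [NormedSpace ℂ U] [CompleteSpace U]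

theorem norm_exp_smul_apply_le_of_pow_sub_smul_one_apply_eq_zero (A : U →L[ℂ] U) (μ : ℂ) {d : ℕ}
    {x : U} (hx : ((A - μ • 1) ^ d) x = 0) {t : ℝ} (ht : 0 ≤ t) :
    ‖exp (t • A) x‖ ≤
      (∑ k ∈ range d, ‖((A - μ • 1) ^ k) x‖) * (1 + t) ^ d * Real.exp (μ.re * t) := by
  have hsub : t • A - algebraMap ℂ (U →L[ℂ] U) (t * μ) = t • (A - μ • 1) := by
    rw [Algebra.algebraMap_eq_smul_one, smul_sub, ← smul_smul, Complex.coe_smul]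
  have hnil : ((t • (A - μ • 1)) ^ d) x = 0 := by simp [smul_pow, hx]
  have hnorm : ‖exp (t * μ)‖ = Real.exp (μ.re * t) := by
    rw [← Complex.exp_eq_exp_ℂ, Complex.norm_exp]; simp [mul_comm]
  rw [exp_eq_exp_smul_exp_sub_algebraMap _ ((t : ℂ) * μ), hsub, smul_apply,
    norm_smul, hnorm, mul_comm]
  gcongr
  refine (norm_exp_apply_le_sum_of_pow_apply_eq_zero hnil).trans ?_
  rw [sum_mul]
  refine sum_le_sum fun k hk => ?_
  rw [smul_pow, smul_apply, norm_smul, Real.norm_of_nonneg (by positivity),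
    mul_comm]
  gcongr
  calc t ^ k ≤ (1 + t) ^ k := by gcongr; linarith
    _ ≤ (1 + t) ^ d := pow_le_pow_right₀ (by linarith) (mem_range.1 hk).le

theorem exp_smul_apply_exp_smul_apply (A : U →L[ℂ] U) (a b : ℝ) (x : U) :
    exp (a • A) (exp (b • A) x) = exp ((a + b) • A) x := by
  let _ : NormedAlgebra ℚ (U →L[ℂ] U) := .restrictScalars ℚ ℂ _
  rw [add_smul, exp_add_of_commute (((Commute.refl A).smul_left a).smul_right b)]
  rfl

theorem hasDerivAt_exp_neg_smul_apply (A : U →L[ℂ] U) {f : ℝ → U} {f' : U} {s : ℝ}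
    (hf : HasDerivAt f f' s) :
    HasDerivAt (fun u : ℝ => exp ((-u) • A) (f u)) (exp ((-s) • A) (f' - A (f s))) s := by
  let L := ContinuousLinearMap.restrictScalarsL ℂ U U ℝ ℝ
  have hexp : HasDerivAt (fun u : ℝ => L (exp ((-u) • A))) (L (-(exp ((-s) • A) * A))) s := by
    have := (hasDerivAt_exp_smul_const A (-s)).scomp s (hasDerivAt_neg s)
    simpa [Function.comp_def] using L.hasFDerivAt.comp_hasDerivAt s this
  refine (hexp.clm_apply hf).congr_deriv ?_
  change -exp ((-s) • A) (A (f s)) + exp ((-s) • A) f' = _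
  rw [map_sub, neg_add_eq_sub]

theorem eq_exp_smul_apply_add_integral (A : U →L[ℂ] U) {f g : ℝ → U} {t : ℝ} (ht : 0 ≤ t)
    (hf : ∀ s ∈ Set.Icc 0 t, HasDerivAt f (A (f s) + g s) s) (hg : ContinuousOn g (Set.Icc 0 t)) :
    f t = exp (t • A) (f 0) + ∫ s in 0..t, exp ((t - s) • A) (g s) := by
  let _ : NormedAlgebra ℚ (U →L[ℂ] U) := .restrictScalars ℚ ℂ _
  have hcont : Continuous fun s : ℝ => exp ((-s) • A) :=
    exp_continuous.comp (continuous_neg.smul continuous_const)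
  have hint : IntervalIntegrable (fun s => exp ((-s) • A) (g s)) MeasureTheory.volume 0 t :=
    (hcont.continuousOn.clm_apply (Set.uIcc_of_le ht ▸ hg)).intervalIntegrable
  have hFTC := intervalIntegral.integral_eq_sub_of_hasDerivAt (fun s hs =>
    (hasDerivAt_exp_neg_smul_apply A (hf s (Set.uIcc_of_le ht ▸ hs))).congr_deriv
      (by rw [add_sub_cancel_left])) hint
  have hconj := congrArg (fun v => exp (t • A) v) hFTC
  rw [← (exp (t • A)).intervalIntegral_comp_comm hint, map_sub] at hconj
  simp only [exp_smul_apply_exp_smul_apply, ← sub_eq_add_neg, neg_zero, sub_self, zero_smul,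
    exp_zero, one_apply_eq_self] at hconj
  rw [hconj]
  abel

end Complex

section GrowthBound

variable {ι 𝕜 E F : Type*} [RCLike 𝕜] [NormedAddCommGroup E] [NormedSpace 𝕜 E]
  [NormedAddCommGroup F] [NormedSpace 𝕜 F]

def growthSubmodule (T : ι → E →L[𝕜] F) (w : ι → ℝ) : Submodule 𝕜 E where
  carrier := {x | ∃ C, ∀ i, ‖T i x‖ ≤ C * w i}
  zero_mem' := ⟨0, by simp⟩
  add_mem' := by
    rintro x y ⟨Cx, hx⟩ ⟨Cy, hy⟩
    exact ⟨Cx + Cy, fun i => by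
      rw [map_add, add_mul]; exact (norm_add_le _ _).trans (add_le_add (hx i) (hy i))⟩
  smul_mem' := by
    rintro c x ⟨C, hx⟩
    exact ⟨‖c‖ * C, fun i => by
      rw [map_smul, norm_smul, mul_assoc]; exact mul_le_mul_of_nonneg_left (hx i) (norm_nonneg c)⟩

theorem exists_opNorm_le_mul_of_growthSubmodule_eq_top [CompleteSpace E] {T : ι → E →L[𝕜] F}
    {w : ι → ℝ} (hw : ∀ i, 0 < w i) (hT : growthSubmodule T w = ⊤) :
    ∃ K > 0, ∀ i, ‖T i‖ ≤ K * w i := by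
  obtain ⟨K, hK⟩ := banach_steinhaus (g := fun i => ((w i)⁻¹ : 𝕜) • T i) fun x => by
    obtain ⟨C, hC⟩ : x ∈ growthSubmodule T w := hT ▸ Submodule.mem_top
    refine ⟨C, fun i => ?_⟩
    rw [smul_apply, norm_smul, norm_inv, RCLike.norm_ofReal, abs_of_pos (hw i),
      inv_mul_le_iff₀ (hw i), mul_comm]
    exact hC i
  refine ⟨max K 1, by positivity, fun i => ?_⟩
  have := hK i
  rw [norm_smul, norm_inv, RCLike.norm_ofReal, abs_of_pos (hw i), inv_mul_le_iff₀ (hw i),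
    mul_comm] at this
  exact this.trans (mul_le_mul_of_nonneg_right (le_max_left _ _) (hw i).le)

end GrowthBound

theorem biSup_maxGenEigenspace_le_growthSubmodule {U : Type*} [NormedAddCommGroup U]
    [NormedSpace ℂ U] [FiniteDimensional ℂ U] (A : U →L[ℂ] U) {S : Set ℂ} {ρ' : ℝ}
    (hS : ∀ μ ∈ S, μ.re ≤ ρ') :
    ⨆ μ ∈ S, End.maxGenEigenspace (A : U →ₗ[ℂ] U) μ ≤
      growthSubmodule (fun τ : ℝ≥0 => exp ((τ : ℝ) • A))
        (fun τ => (1 + τ) ^ finrank ℂ U * Real.exp (ρ' * τ)) := by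
  have : CompleteSpace U := FiniteDimensional.complete ℂ U
  refine iSup₂_le fun μ hμ x hx => ?_
  rw [← A.ker_pow_finrank_sub_smul_one_eq_maxGenEigenspace] at hx
  refine ⟨∑ k ∈ range (finrank ℂ U), ‖((A - μ • 1) ^ k) x‖, fun τ => ?_⟩
  refine (norm_exp_smul_apply_le_of_pow_sub_smul_one_apply_eq_zero A μ hx τ.2).trans ?_
  beta_reduce
  rw [mul_assoc]
  gcongr _ * (_ * ?_)
  exact Real.exp_le_exp.2 (mul_le_mul_of_nonneg_right (hS μ hμ) τ.2)

theorem one_add_pow_mul_exp_mul_le {a b : ℝ} {d N : ℕ} {s t : ℝ} (hs : 0 ≤ s) (hst : s ≤ t) :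
    (1 + (t - s)) ^ d * Real.exp (a * (t - s)) * ((1 + s) ^ N * Real.exp (b * s)) ≤
      (1 + t) ^ (d + N) * Real.exp (max a b * t) := by
  have hexp : Real.exp (a * (t - s)) * Real.exp (b * s) ≤ Real.exp (max a b * t) := by
    rw [← Real.exp_add, Real.exp_le_exp]
    nlinarith [le_max_left a b, le_max_right a b]
  have hpow : (1 + (t - s)) ^ d * (1 + s) ^ N ≤ (1 + t) ^ (d + N) := by
    rw [pow_add]
    exact mul_le_mul (pow_le_pow_left₀ (by linarith) (by linarith) d)
      (pow_le_pow_left₀ (by linarith) (by linarith) N) (by positivity) (pow_nonneg (by linarith) _)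
  calc (1 + (t - s)) ^ d * Real.exp (a * (t - s)) * ((1 + s) ^ N * Real.exp (b * s))
      = (1 + (t - s)) ^ d * (1 + s) ^ N * (Real.exp (a * (t - s)) * Real.exp (b * s)) := by ring
    _ ≤ (1 + t) ^ (d + N) * Real.exp (max a b * t) :=
      mul_le_mul hpow hexp (by positivity) (pow_nonneg (by linarith) _)

section Convolution

variable {𝕜 E F : Type*} [NontriviallyNormedField 𝕜] [NormedAddCommGroup E] [NormedSpace 𝕜 E]
  [NormedAddCommGroup F] [NormedSpace 𝕜 F] [NormedSpace ℝ F]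

theorem exists_norm_apply_add_integral_le {T : ℝ → E →L[𝕜] F} {g : ℝ → E} {K C a b : ℝ}
    {d N : ℕ} (hT : ∀ τ ≥ 0, ‖T τ‖ ≤ K * (1 + τ) ^ d * Real.exp (a * τ))
    (hg : ∀ s ≥ 0, ‖g s‖ ≤ C * (1 + s) ^ N * Real.exp (b * s)) (x₀ : E) :
    ∃ C' > 0, ∀ t ≥ 0, ‖T t x₀ + ∫ s in 0..t, T (t - s) (g s)‖ ≤
      C' * (1 + t) ^ (N + d + 1) * Real.exp (max a b * t) := by
  have hK : 0 ≤ K := by simpa using (norm_nonneg _).trans (hT 0 le_rfl)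
  have hC : 0 ≤ C := by simpa using (norm_nonneg _).trans (hg 0 le_rfl)
  refine ⟨K * ‖x₀‖ + K * C + 1, by positivity, fun t ht => ?_⟩
  set W := (1 + t) ^ (N + d + 1) * Real.exp (max a b * t)
  have hW : 0 ≤ W := by positivity
  have hinitial : ‖T t x₀‖ ≤ K * ‖x₀‖ * W := by
    have hweight : (1 + t) ^ d * Real.exp (a * t) ≤ W :=
      mul_le_mul (pow_le_pow_right₀ (by linarith) (by omega))
        (Real.exp_le_exp.2 (mul_le_mul_of_nonneg_right (le_max_left a b) ht))
        (by positivity) (by positivity)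
    calc ‖T t x₀‖ ≤ ‖T t‖ * ‖x₀‖ := (T t).le_opNorm x₀
      _ ≤ K * (1 + t) ^ d * Real.exp (a * t) * ‖x₀‖ := by gcongr; exact hT t ht
      _ = K * ‖x₀‖ * ((1 + t) ^ d * Real.exp (a * t)) := by ring
      _ ≤ K * ‖x₀‖ * W := by gcongr
  have hintegrand : ∀ s ∈ Set.uIoc 0 t,
      ‖T (t - s) (g s)‖ ≤ K * C * ((1 + t) ^ (d + N) * Real.exp (max a b * t)) := by
    intro s hs
    rw [Set.uIoc_of_le ht] at hs
    calc ‖T (t - s) (g s)‖ ≤ ‖T (t - s)‖ * ‖g s‖ := (T (t - s)).le_opNorm _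
      _ ≤ K * (1 + (t - s)) ^ d * Real.exp (a * (t - s)) * (C * (1 + s) ^ N * Real.exp (b * s)) :=
        mul_le_mul (hT _ (by linarith [hs.2])) (hg s hs.1.le) (norm_nonneg _)
          ((norm_nonneg _).trans (hT _ (by linarith [hs.2])))
      _ = K * C *
          ((1 + (t - s)) ^ d * Real.exp (a * (t - s)) * ((1 + s) ^ N * Real.exp (b * s))) := by
        ring
      _ ≤ _ := mul_le_mul_of_nonneg_left (one_add_pow_mul_exp_mul_le hs.1.le hs.2) (by positivity)
  have hintegral : ‖∫ s in 0..t, T (t - s) (g s)‖ ≤ K * C * W := by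
    refine (intervalIntegral.norm_integral_le_of_norm_le_const hintegrand).trans ?_
    rw [sub_zero, abs_of_nonneg ht, mul_assoc]
    gcongr
    calc (1 + t) ^ (d + N) * Real.exp (max a b * t) * t
        ≤ (1 + t) ^ (d + N) * Real.exp (max a b * t) * (1 + t) := by gcongr; linarith
      _ = W := by ring
  calc ‖T t x₀ + ∫ s in 0..t, T (t - s) (g s)‖ ≤ K * ‖x₀‖ * W + K * C * W :=
        (norm_add_le _ _).trans (add_le_add hinitial hintegral)
    _ ≤ (K * ‖x₀‖ + K * C + 1) * W := by nlinarith
    _ = _ := by ring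

end Convolution

theorem projected_solution_below_bound_general
    (U : Type*) [NormedAddCommGroup U] [NormedSpace ℂ U] [FiniteDimensional ℂ U]
    (A : U →L[ℂ] U) (ρ ρ' β : ℝ) (N : ℕ) (C : ℝ)
    (E : U →L[ℂ] U)
    (hE1 : ∀ v ∈ ⨆ μ ∈ {μ : ℂ | μ ∈ spectrum ℂ A ∧ μ.re ≤ ρ'},
        LinearMap.ker (((A - μ • (1 : U →L[ℂ] U)) ^ (Module.finrank ℂ U) : U →L[ℂ] U) : U →ₗ[ℂ] U), E v = v)
    (hE0 : ∀ v ∈ ⨆ μ ∈ {μ : ℂ | μ ∈ spectrum ℂ A ∧ ¬ μ.re ≤ ρ'},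
        LinearMap.ker (((A - μ • (1 : U →L[ℂ] U)) ^ (Module.finrank ℂ U) : U →L[ℂ] U) : U →ₗ[ℂ] U), E v = 0)
    (Φ ψ : ℝ → U)
    (hΦ : ∀ t ≥ (0:ℝ), HasDerivAt Φ (A (Φ t) + ψ t) t)
    (hψc : ContinuousOn ψ (Set.Ici 0))
    (hψbound : ∀ t ≥ (0:ℝ), ‖ψ t‖ ≤ C * (1 + t) ^ N * Real.exp ((ρ + β) * t)) :
    ∃ C' > (0:ℝ), ∀ t ≥ (0:ℝ),
      ‖E (Φ t)‖ ≤ C' * (1 + t) ^ (N + Module.finrank ℂ U + 1)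
        * Real.exp (max ρ' (ρ + β) * t) := by
  have : CompleteSpace U := FiniteDimensional.complete ℂ U
  simp only [ContinuousLinearMap.spectrum_eq,
    A.ker_pow_finrank_sub_smul_one_eq_maxGenEigenspace] at hE1 hE0
  have htop := End.sup_biSup_maxGenEigenspace_eq_top (A : U →ₗ[ℂ] U) (·.re ≤ ρ')
  have hEA (v : U) : E (A v) = A (E v) :=
    LinearMap.commute_apply_of_sup_eq_top htop hE1 hE0 (End.mapsTo_biSup_maxGenEigenspace _ _)
      (End.mapsTo_biSup_maxGenEigenspace _ _) v
  obtain ⟨K, -, hK⟩ := exists_opNorm_le_mul_of_growthSubmodule_eq_top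
    (T := fun τ : ℝ≥0 => (exp ((τ : ℝ) • A)).comp E) (fun τ => by positivity)
    (eq_top_iff.2 fun v _ => biSup_maxGenEigenspace_le_growthSubmodule A (fun μ hμ => hμ.2)
      (LinearMap.apply_mem_of_sup_eq_top htop hE1 hE0 v))
  obtain ⟨C', hC', hbound⟩ := exists_norm_apply_add_integral_le
    (T := fun τ => (exp (τ • A)).comp E) (fun τ hτ => (hK ⟨τ, hτ⟩).trans_eq (mul_assoc _ _ _).symm)
    hψbound (Φ 0)
  refine ⟨C', hC', fun t ht => ?_⟩
  rw [eq_exp_smul_apply_add_integral A ht (f := fun s => E (Φ s)) (g := fun s => E (ψ s))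
    (fun s hs => ((E.restrictScalars ℝ).hasFDerivAt.comp_hasDerivAt s (hΦ s hs.1)).congr_deriv
      (by rw [ContinuousLinearMap.coe_restrictScalars', map_add, hEA]))
    (E.continuous.comp_continuousOn (hψc.mono Set.Icc_subset_Ici_self))]
  exact hbound t ht

/-- Bound on the part of a solution below the critical line.  Let `ρ' < ρ`, `β < 0`, and let
`E` be the spectral projection of `A` associated to the eigenvalues `μ` with `Re μ ≤ ρ'`.
If `Φ' = AΦ + ψ` on `[0,∞)` with `‖ψ(t)‖ ≤ C (1+t)^N e^{(ρ+β)t}`, then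
`‖E Φ(t)‖ ≤ C' (1+t)^{N + dim U + 1} e^{max(ρ', ρ+β) t}` for all `t ≥ 0`. -/
theorem projected_solution_below_bound
    (U : Type*) [NormedAddCommGroup U] [NormedSpace ℂ U] [FiniteDimensional ℂ U]
    (A : U →L[ℂ] U) (ρ ρ' β : ℝ) (hρ' : ρ' < ρ) (hβ : β < 0) (N : ℕ) (C : ℝ) (hC : 0 ≤ C)
    (E : U →L[ℂ] U)
    (hE1 : ∀ v ∈ ⨆ μ ∈ {μ : ℂ | μ ∈ spectrum ℂ A ∧ μ.re ≤ ρ'},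
        LinearMap.ker (((A - μ • (1 : U →L[ℂ] U)) ^ (Module.finrank ℂ U) : U →L[ℂ] U) : U →ₗ[ℂ] U), E v = v)
    (hE0 : ∀ v ∈ ⨆ μ ∈ {μ : ℂ | μ ∈ spectrum ℂ A ∧ ¬ μ.re ≤ ρ'},
        LinearMap.ker (((A - μ • (1 : U →L[ℂ] U)) ^ (Module.finrank ℂ U) : U →L[ℂ] U) : U →ₗ[ℂ] U), E v = 0)
    (Φ ψ : ℝ → U)
    (hΦ : ∀ t ≥ (0:ℝ), HasDerivAt Φ (A (Φ t) + ψ t) t)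
    (hψc : ContinuousOn ψ (Set.Ici 0))
    (hψbound : ∀ t ≥ (0:ℝ), ‖ψ t‖ ≤ C * (1 + t) ^ N * Real.exp ((ρ + β) * t)) :
    ∃ C' > (0:ℝ), ∀ t ≥ (0:ℝ),
      ‖E (Φ t)‖ ≤ C' * (1 + t) ^ (N + Module.finrank ℂ U + 1)
        * Real.exp (max ρ' (ρ + β) * t) :=
  projected_solution_below_bound_general U A ρ ρ' β N C E hE1 hE0 Φ ψ hΦ hψc hψbound
end

section
/- Let U be a finite-dimensional complex normed vector space, A ∈ End(U), ρ ∈ ℝ, β < 0, N ∈ ℕ and C ≥ 0. Let E be the spectral projection of A associated to the set of eigenvalues μ of A with Re μ > ρ. Let Φ : [0,∞) → U be differentiable and ψ : [0,∞) → U continuous with Φ'(t) = A Φ(t) + ψ(t), ‖Φ(t)‖ ≤ C (1+t)^N e^{ρ t} and ‖ψ(t)‖ ≤ C (1+t)^N e^{(ρ+β)t} for all t ≥ 0. Then there exists C' > 0 such that ‖E Φ(t)‖ ≤ C' (1+t)^{N + dim U + 1} e^{(ρ+β)t} for all t ≥ 0. -/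
/-!
Let `V₊` be the sum of the generalized eigenspaces of `A` with `Re μ > ρ`. The projection `E` is
the identity on `V₊` and zero on the complementary sum, so it commutes with `A` and takes values
in `V₊`. The spectrum is finite, so some `ρ₁ > ρ` lies below every `Re μ` that occurs in `V₊`.
On a generalized eigenvector `e^{uA} w` is `e^{uμ}` times a polynomial in `u`, so the backward
flow decays at rate `ρ₁` on `V₊`, and by Banach–Steinhaus uniformly:
`‖e^{uA} E v‖ ≤ c e^{ρ₁ u} ‖v‖` for `u ≤ 0`.
Variation of constants for `EΦ` gives
`EΦ(t) = e^{(t-T)A} EΦ(T) - ∫_t^T e^{(t-s)A} Eψ(s) ds`. As `T → ∞` the first term tends to `0`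
since `ρ < ρ₁`, and the integral is `O((1+t)^N e^{(ρ+β)t})` since `ρ + β < ρ₁`.
-/

open Filter MeasureTheory Finset Nat Set Topology

theorem exists_one_add_pow_le_mul_exp (M : ℕ) {ε : ℝ} (hε : 0 < ε) :
    ∃ c ≥ 0, ∀ u ≥ (0 : ℝ), (1 + u) ^ M ≤ c * Real.exp (ε * u) := by
  refine ⟨M ! / ε ^ M * Real.exp ε, by positivity, fun u hu => ?_⟩
  calc (1 + u) ^ M = (ε * (1 + u)) ^ M / M ! * (M ! / ε ^ M) := by
        rw [mul_pow]; field_simp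
    _ ≤ Real.exp (ε * (1 + u)) * (M ! / ε ^ M) := by
        gcongr; exact Real.pow_div_factorial_le_exp _ (by positivity) M
    _ = M ! / ε ^ M * Real.exp ε * Real.exp (ε * u) := by
        rw [mul_add, mul_one, Real.exp_add]; ring

theorem exists_one_add_pow_le_mul_one_add_pow_mul_exp (M : ℕ) {ε : ℝ} (hε : 0 < ε) :
    ∃ c ≥ 0, ∀ t ≥ (0 : ℝ), ∀ s ≥ t, (1 + s) ^ M ≤ c * (1 + t) ^ M * Real.exp (ε * (s - t)) := by
  obtain ⟨c, hc₀, hc⟩ := exists_one_add_pow_le_mul_exp M hε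
  refine ⟨c, hc₀, fun t ht s hs => ?_⟩
  calc (1 + s) ^ M ≤ ((1 + t) * (1 + (s - t))) ^ M :=
        pow_le_pow_left₀ (by linarith) (by nlinarith [mul_nonneg ht (sub_nonneg.mpr hs)]) M
    _ ≤ (1 + t) ^ M * (c * Real.exp (ε * (s - t))) := by
        rw [mul_pow]; gcongr; exact hc _ (sub_nonneg.mpr hs)
    _ = c * (1 + t) ^ M * Real.exp (ε * (s - t)) := by ring

theorem integral_exp_neg_mul_sub_le {a t T : ℝ} (ha : 0 < a) :
    ∫ s in t..T, Real.exp (-(a * (s - t))) ≤ 1 / a := by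
  rw [intervalIntegral.integral_comp_sub_right (fun x => Real.exp (-(a * x))),
    intervalIntegral.integral_comp_mul_left (fun x => Real.exp (-x)) ha.ne',
    intervalIntegral.integral_comp_neg, integral_exp]
  simp only [sub_self, mul_zero, neg_zero, Real.exp_zero, smul_eq_mul, one_div]
  exact mul_le_of_le_one_right (inv_nonneg.2 ha.le) (sub_le_self _ (Real.exp_pos _).le)

theorem exists_forall_norm_apply_le_mul_mul_norm {ι 𝕜 E F : Type*} [RCLike 𝕜]
    [NormedAddCommGroup E] [NormedSpace 𝕜 E] [CompleteSpace E] [NormedAddCommGroup F]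
    [NormedSpace 𝕜 F] {T : ι → E →L[𝕜] F} {w : ι → ℝ} (hw : ∀ i, 0 < w i)
    (h : ∀ x, ∃ c, ∀ i, ‖T i x‖ ≤ c * w i) : ∃ c ≥ 0, ∀ i x, ‖T i x‖ ≤ c * w i * ‖x‖ := by
  obtain ⟨c, hc⟩ := banach_steinhaus (g := fun i => ((w i : 𝕜))⁻¹ • T i) fun x => by
    obtain ⟨c, hc⟩ := h x
    refine ⟨c, fun i => ?_⟩
    rw [smul_apply, norm_smul, norm_inv, RCLike.norm_ofReal, abs_of_pos (hw i),
      inv_mul_le_iff₀ (hw i), mul_comm]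
    exact hc i
  refine ⟨max c 0, le_max_right _ _, fun i x => ?_⟩
  have hTi : ‖T i‖ = w i * ‖((w i : 𝕜))⁻¹ • T i‖ := by
    rw [norm_smul, norm_inv, RCLike.norm_ofReal, abs_of_pos (hw i), mul_inv_cancel_left₀ (hw i).ne']
  calc ‖T i x‖ ≤ ‖T i‖ * ‖x‖ := (T i).le_opNorm x
    _ ≤ max c 0 * w i * ‖x‖ := by
      rw [hTi, mul_comm (max c 0)]
      gcongr
      exacts [(hw i).le, (hc i).trans (le_max_left _ _)]

theorem Set.Finite.exists_gt_forall_lt {ι : Type*} {S : Set ι} (hS : S.Finite) {f : ι → ℝ}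
    {ρ : ℝ} (h : ∀ i ∈ S, ρ < f i) : ∃ ρ₁, ρ < ρ₁ ∧ ∀ i ∈ S, ρ₁ < f i := by
  obtain ⟨ρ₁, hlt, hρ₁⟩ := ((hS.eventually_all.mpr fun i hi =>
    (eventually_lt_nhds (h i hi)).filter_mono nhdsWithin_le_nhds).and
      (self_mem_nhdsWithin : Ioi ρ ∈ 𝓝[>] ρ)).exists
  exact ⟨ρ₁, hρ₁, hlt⟩

theorem ContinuousLinearMap.toLinearMap_sub_smul_one_pow {𝕜 U : Type*} [NontriviallyNormedField 𝕜]
    [NormedAddCommGroup U] [NormedSpace 𝕜 U] (A : U →L[𝕜] U) (μ : 𝕜) (k : ℕ) :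
    (((A - μ • 1) ^ k : U →L[𝕜] U) : Module.End 𝕜 U) = ((A : Module.End 𝕜 U) - μ • 1) ^ k := by
  simp

theorem ker_pow_sub_smul_one_eq_maxGenEigenspace {𝕜 U : Type*} [NontriviallyNormedField 𝕜]
    [NormedAddCommGroup U] [NormedSpace 𝕜 U] [FiniteDimensional 𝕜 U] (A : U →L[𝕜] U) (μ : 𝕜) :
    LinearMap.ker (((A - μ • 1) ^ Module.finrank 𝕜 U : U →L[𝕜] U) : U →ₗ[𝕜] U) =
      Module.End.maxGenEigenspace (A : Module.End 𝕜 U) μ := by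
  rw [Module.End.maxGenEigenspace_eq_genEigenspace_finrank, Module.End.genEigenspace_nat,
    ContinuousLinearMap.toLinearMap_sub_smul_one_pow]

theorem sup_biSup_maxGenEigenspace_eq_top {K V : Type*} [Field K] [IsAlgClosed K] [AddCommGroup V]
    [Module K V] [FiniteDimensional K V] (f : Module.End K V) {S T : Set K}
    (hST : ∀ μ, f.HasEigenvalue μ → μ ∈ S ∪ T) :
    (⨆ μ ∈ S, f.maxGenEigenspace μ) ⊔ (⨆ μ ∈ T, f.maxGenEigenspace μ) = ⊤ := by
  refine eq_top_iff.mpr (f.iSup_maxGenEigenspace_eq_top ▸ iSup_le fun μ => ?_)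
  rcases eq_or_ne (f.maxGenEigenspace μ) ⊥ with hμ | hμ
  · exact hμ ▸ bot_le
  rcases hST μ (Module.End.HasUnifEigenvalue.lt zero_lt_one hμ) with hS | hT
  · exact le_sup_of_le_left (le_biSup _ hS)
  · exact le_sup_of_le_right (le_biSup _ hT)

theorem biSup_maxGenEigenspace_le_comap {R M : Type*} [CommRing R] [AddCommGroup M] [Module R M]
    (f : Module.End R M) (S : Set R) :
    ⨆ μ ∈ S, f.maxGenEigenspace μ ≤ (⨆ μ ∈ S, f.maxGenEigenspace μ).comap f :=
  iSup₂_le fun μ hμ _ hx =>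
    le_biSup f.maxGenEigenspace hμ (f.mapsTo_maxGenEigenspace_of_comm rfl μ hx)

section Projection

variable {R M : Type*} [Ring R] [AddCommGroup M] [Module R M] {V₁ V₀ : Submodule R M}
  {E : M →ₗ[R] M}

theorem apply_mem_of_eq_self_of_eq_zero (hV : V₁ ⊔ V₀ = ⊤) (hE₁ : ∀ v ∈ V₁, E v = v)
    (hE₀ : ∀ v ∈ V₀, E v = 0) (v : M) : E v ∈ V₁ := by
  obtain ⟨v₁, hv₁, v₀, hv₀, rfl⟩ := Submodule.mem_sup.mp (hV ▸ Submodule.mem_top : v ∈ V₁ ⊔ V₀)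
  rw [map_add, hE₁ v₁ hv₁, hE₀ v₀ hv₀, add_zero]
  exact hv₁

theorem commute_of_eq_self_of_eq_zero (hV : V₁ ⊔ V₀ = ⊤) (hE₁ : ∀ v ∈ V₁, E v = v)
    (hE₀ : ∀ v ∈ V₀, E v = 0) {f : M →ₗ[R] M} (hf₁ : V₁ ≤ V₁.comap f) (hf₀ : V₀ ≤ V₀.comap f) :
    Commute E f := by
  refine LinearMap.ext fun v => ?_
  obtain ⟨v₁, hv₁, v₀, hv₀, rfl⟩ := Submodule.mem_sup.mp (hV ▸ Submodule.mem_top : v ∈ V₁ ⊔ V₀)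
  simp only [Module.End.mul_apply, map_add, hE₁ v₁ hv₁, hE₀ v₀ hv₀, hE₁ _ (hf₁ hv₁),
    hE₀ _ (hf₀ hv₀), map_zero]

end Projection

section Flow

variable {X : Type*} [NormedAddCommGroup X] [NormedSpace ℂ X]

theorem exp_smul_apply_eq_of_pow_sub_smul_apply_eq_zero [CompleteSpace X] {A : X →L[ℂ] X}
    {μ : ℂ} {m : ℕ} {w : X} (hw : ((A - μ • 1) ^ m) w = 0) (u : ℝ) :
    NormedSpace.exp (u • A) w =
      Complex.exp (u * μ) • ∑ k ∈ range m, ((k ! : ℝ)⁻¹ * u ^ k) • ((A - μ • 1) ^ k) w := by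
  -- `NormedSpace.exp_add_of_commute` asks for a `NormedAlgebra ℚ` instance
  let : NormedAlgebra ℚ (X →L[ℂ] X) := NormedAlgebra.restrictScalars ℚ ℂ _
  set B := A - μ • (1 : X →L[ℂ] X)
  have hsplit : u • A = algebraMap ℂ _ (u * μ) + u • B := by
    simp only [B, Algebra.algebraMap_eq_smul_one, ← Complex.coe_smul, smul_sub, smul_smul]; abel
  have hterm (k : ℕ) : ((k ! : ℝ)⁻¹ • (u • B) ^ k) w = ((k ! : ℝ)⁻¹ * u ^ k) • (B ^ k) w := by
    rw [smul_pow, smul_smul, smul_apply]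
  have hnil : NormedSpace.exp (u • B) w = ∑ k ∈ range m, ((k ! : ℝ)⁻¹ * u ^ k) • (B ^ k) w := by
    refine ((NormedSpace.exp_series_hasSum_exp' (𝕂 := ℝ) (u • B)).mapL
      (ContinuousLinearMap.apply ℂ X w)).unique ?_
    simp only [ContinuousLinearMap.apply_apply, hterm]
    refine hasSum_sum_of_ne_finset_zero fun k hk => ?_
    obtain ⟨j, rfl⟩ := Nat.exists_eq_add_of_le (not_lt.mp (mt mem_range.mpr hk))
    rw [add_comm m j, pow_add B, mul_apply_eq_comp, hw, map_zero, smul_zero]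
  rw [hsplit, NormedSpace.exp_add_of_commute (Algebra.commutes _ _),
    ← NormedSpace.algebraMap_exp_comm, ← Complex.exp_eq_exp_ℂ, mul_apply_eq_comp, hnil,
    Algebra.algebraMap_eq_smul_one, smul_apply, one_apply_eq_self]

theorem norm_exp_smul_apply_le_of_pow_sub_smul_apply_eq_zero [CompleteSpace X]
    {A : X →L[ℂ] X} {μ : ℂ} {m : ℕ} {w : X} (hw : ((A - μ • 1) ^ m) w = 0) (u : ℝ) :
    ‖NormedSpace.exp (u • A) w‖ ≤
      (∑ k ∈ range m, ‖((A - μ • 1) ^ k) w‖) * (1 + |u|) ^ m * Real.exp (μ.re * u) := by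
  have hcoeff {k : ℕ} (hk : k ∈ range m) : ‖(k ! : ℝ)⁻¹ * u ^ k‖ ≤ (1 + |u|) ^ m :=
    calc ‖(k ! : ℝ)⁻¹ * u ^ k‖ ≤ 1 * (1 + |u|) ^ k := by
          rw [norm_mul, norm_pow, norm_inv, Real.norm_natCast, Real.norm_eq_abs]
          gcongr
          · exact inv_le_one_of_one_le₀ (mod_cast factorial_pos k)
          · linarith [abs_nonneg u]
      _ ≤ (1 + |u|) ^ m := by
          rw [one_mul]
          exact pow_le_pow_right₀ (by linarith [abs_nonneg u]) (mem_range.mp hk).le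
  rw [exp_smul_apply_eq_of_pow_sub_smul_apply_eq_zero hw, norm_smul, Complex.norm_exp,
    Complex.re_ofReal_mul, mul_comm u, mul_comm _ (Real.exp _), sum_mul]
  gcongr
  refine (norm_sum_le _ _).trans (sum_le_sum fun k hk => ?_)
  rw [norm_smul, mul_comm]
  gcongr
  exact hcoeff hk

def expDecaySubmodule (A : X →L[ℂ] X) (ρ : ℝ) : Submodule ℂ X where
  carrier := {w | ∃ c, ∀ u ≤ (0 : ℝ), ‖NormedSpace.exp (u • A) w‖ ≤ c * Real.exp (ρ * u)}
  zero_mem' := ⟨0, fun u _ => by simp⟩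
  add_mem' := by
    rintro w₁ w₂ ⟨c₁, h₁⟩ ⟨c₂, h₂⟩
    refine ⟨c₁ + c₂, fun u hu => ?_⟩
    rw [map_add, add_mul]
    exact (norm_add_le _ _).trans (add_le_add (h₁ u hu) (h₂ u hu))
  smul_mem' := by
    rintro a w ⟨c, h⟩
    refine ⟨‖a‖ * c, fun u hu => ?_⟩
    rw [map_smul, norm_smul, mul_assoc]
    exact mul_le_mul_of_nonneg_left (h u hu) (norm_nonneg a)

theorem maxGenEigenspace_le_expDecaySubmodule [CompleteSpace X] {A : X →L[ℂ] X} {μ : ℂ}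
    {ρ : ℝ} (hρ : ρ < μ.re) :
    Module.End.maxGenEigenspace (A : Module.End ℂ X) μ ≤ expDecaySubmodule A ρ := by
  intro w hw
  obtain ⟨m, hm⟩ := (Module.End.mem_maxGenEigenspace _ _ _).mp hw
  rw [← ContinuousLinearMap.toLinearMap_sub_smul_one_pow] at hm
  obtain ⟨c, -, hc⟩ := exists_one_add_pow_le_mul_exp m (sub_pos.mpr hρ)
  refine ⟨(∑ k ∈ range m, ‖((A - μ • 1) ^ k) w‖) * c, fun u hu => ?_⟩
  calc ‖NormedSpace.exp (u • A) w‖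
      ≤ (∑ k ∈ range m, ‖((A - μ • 1) ^ k) w‖) * (1 + |u|) ^ m * Real.exp (μ.re * u) :=
        norm_exp_smul_apply_le_of_pow_sub_smul_apply_eq_zero hm u
    _ ≤ (∑ k ∈ range m, ‖((A - μ • 1) ^ k) w‖) * (c * Real.exp ((μ.re - ρ) * |u|)) *
          Real.exp (μ.re * u) := by
        gcongr
        exact hc _ (abs_nonneg u)
    _ = (∑ k ∈ range m, ‖((A - μ • 1) ^ k) w‖) * c * Real.exp (ρ * u) := by
        rw [abs_of_nonpos hu, mul_assoc, mul_assoc, ← Real.exp_add]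
        ring_nf

theorem exists_forall_norm_exp_smul_apply_le [CompleteSpace X] {A E : X →L[ℂ] X} {ρ : ℝ}
    (hE : ∀ v, E v ∈ expDecaySubmodule A ρ) :
    ∃ c ≥ 0, ∀ u ≤ (0 : ℝ), ∀ v,
      ‖NormedSpace.exp (u • A) (E v)‖ ≤ c * Real.exp (ρ * u) * ‖v‖ := by
  obtain ⟨c, hc, h⟩ := exists_forall_norm_apply_le_mul_mul_norm
    (T := fun u : Iic (0 : ℝ) => NormedSpace.exp ((u : ℝ) • A) ∘L E) (fun u => Real.exp_pos _)
    fun v => (hE v).imp fun c hc u => hc u u.2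
  exact ⟨c, hc, fun u hu => h ⟨u, hu⟩⟩

theorem eq_exp_smul_apply_sub_integral_of_hasDerivAt [CompleteSpace X] {A : X →L[ℂ] X}
    {Y g : ℝ → X} {t T : ℝ} (htT : t ≤ T) (hY : ∀ s ∈ Icc t T, HasDerivAt Y (A (Y s) + g s) s)
    (hg : ContinuousOn g (Icc t T)) :
    Y t = NormedSpace.exp ((t - T) • A) (Y T) -
      ∫ s in t..T, NormedSpace.exp ((t - s) • A) (g s) := by
  let : NormedAlgebra ℚ (X →L[ℂ] X) := NormedAlgebra.restrictScalars ℚ ℂ _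
  have hexp (s : ℝ) : HasDerivAt (fun s : ℝ => (NormedSpace.exp ((t - s) • A)).restrictScalars ℝ)
      ((-(NormedSpace.exp ((t - s) • A) * A)).restrictScalars ℝ) s := by
    have h := (hasDerivAt_exp_smul_const (𝕂 := ℝ) A (t - s)).scomp s
      ((hasDerivAt_id s).const_sub t)
    simpa [Function.comp_def] using
      (ContinuousLinearMap.restrictScalarsL ℂ X X ℝ ℝ).hasFDerivAt.comp_hasDerivAt s h
  have hderiv (s : ℝ) (hs : s ∈ Icc t T) :
      HasDerivAt (fun s => NormedSpace.exp ((t - s) • A) (Y s))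
        (NormedSpace.exp ((t - s) • A) (g s)) s := by
    refine ((hexp s).clm_apply (hY s hs)).congr_deriv ?_
    change -(NormedSpace.exp ((t - s) • A) (A (Y s))) +
      NormedSpace.exp ((t - s) • A) (A (Y s) + g s) = _
    rw [map_add]
    abel
  have hcont : ContinuousOn (fun s => NormedSpace.exp ((t - s) • A) (g s)) (uIcc t T) := by
    rw [uIcc_of_le htT]
    exact (NormedSpace.exp_continuous.comp (by fun_prop)).continuousOn.clm_apply hg
  have hFTC := intervalIntegral.integral_eq_sub_of_hasDerivAt
    (fun s hs => hderiv s (uIcc_of_le htT ▸ hs)) hcont.intervalIntegrable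
  simp only [sub_self, zero_smul, NormedSpace.exp_zero, one_apply_eq_self] at hFTC
  rw [hFTC, sub_sub_cancel]

section Decay

variable {A E : X →L[ℂ] X} {c ρ₁ C : ℝ} {N : ℕ}

theorem tendsto_exp_smul_apply_atTop_zero (hc : 0 ≤ c) (hC : 0 ≤ C)
    (hdecay : ∀ u ≤ (0 : ℝ), ∀ v, ‖NormedSpace.exp (u • A) (E v)‖ ≤ c * Real.exp (ρ₁ * u) * ‖v‖)
    {Φ : ℝ → X} {ρ : ℝ} (hρ : ρ < ρ₁)
    (hΦ : ∀ t ≥ (0 : ℝ), ‖Φ t‖ ≤ C * (1 + t) ^ N * Real.exp (ρ * t)) (t : ℝ) :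
    Tendsto (fun T => NormedSpace.exp ((t - T) • A) (E (Φ T))) atTop (𝓝 0) := by
  set ε := (ρ₁ - ρ) / 2
  have hε : 0 < ε := by simp only [ε]; linarith
  obtain ⟨c', -, hc'⟩ := exists_one_add_pow_le_mul_exp N hε
  have hbound : ∀ T ≥ max t 0, ‖NormedSpace.exp ((t - T) • A) (E (Φ T))‖ ≤
      c * C * c' * Real.exp (ρ₁ * t) * Real.exp (-(ε * T)) := by
    intro T hT
    have hT0 : 0 ≤ T := (le_max_right _ _).trans hT
    calc ‖NormedSpace.exp ((t - T) • A) (E (Φ T))‖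
        ≤ c * Real.exp (ρ₁ * (t - T)) * (C * (1 + T) ^ N * Real.exp (ρ * T)) :=
          (hdecay _ (sub_nonpos.mpr ((le_max_left _ _).trans hT)) _).trans
            (by gcongr; exact hΦ T hT0)
      _ ≤ c * Real.exp (ρ₁ * (t - T)) * (C * (c' * Real.exp (ε * T)) * Real.exp (ρ * T)) := by
          gcongr; exact hc' T hT0
      _ = c * C * c' * Real.exp (ρ₁ * (t - T) + ε * T + ρ * T) := by
          rw [Real.exp_add, Real.exp_add]; ring
      _ = c * C * c' * Real.exp (ρ₁ * t) * Real.exp (-(ε * T)) := by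
          rw [mul_assoc _ (Real.exp _), ← Real.exp_add]; simp only [ε]; ring_nf
  have hlim : Tendsto (fun T => c * C * c' * Real.exp (ρ₁ * t) * Real.exp (-(ε * T))) atTop
      (𝓝 0) := by
    simpa using (Real.tendsto_exp_neg_atTop_nhds_zero.comp
      (tendsto_id.const_mul_atTop hε)).const_mul (c * C * c' * Real.exp (ρ₁ * t))
  exact squeeze_zero_norm' (eventually_atTop.mpr ⟨max t 0, hbound⟩) hlim

theorem exists_forall_norm_integral_exp_smul_apply_le (hc : 0 ≤ c) (hC : 0 ≤ C)
    (hdecay : ∀ u ≤ (0 : ℝ), ∀ v, ‖NormedSpace.exp (u • A) (E v)‖ ≤ c * Real.exp (ρ₁ * u) * ‖v‖)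
    {ψ : ℝ → X} {γ : ℝ} (hγ : γ < ρ₁)
    (hψ : ∀ t ≥ (0 : ℝ), ‖ψ t‖ ≤ C * (1 + t) ^ N * Real.exp (γ * t)) :
    ∃ K, ∀ t ≥ (0 : ℝ), ∀ T ≥ t,
      ‖∫ s in t..T, NormedSpace.exp ((t - s) • A) (E (ψ s))‖ ≤
        K * (1 + t) ^ N * Real.exp (γ * t) := by
  set ε := (ρ₁ - γ) / 2
  have hε : 0 < ε := by simp only [ε]; linarith
  obtain ⟨c', hc'₀, hc'⟩ := exists_one_add_pow_le_mul_one_add_pow_mul_exp N hε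
  refine ⟨c * C * c' / ε, fun t ht T hT => ?_⟩
  set K := c * C * c' * (1 + t) ^ N * Real.exp (γ * t)
  have hbound : ∀ s ∈ Ioc t T, ‖NormedSpace.exp ((t - s) • A) (E (ψ s))‖ ≤
      K * Real.exp (-(ε * (s - t))) := by
    intro s hs
    have hs0 : 0 ≤ s := ht.trans hs.1.le
    calc ‖NormedSpace.exp ((t - s) • A) (E (ψ s))‖
        ≤ c * Real.exp (ρ₁ * (t - s)) * (C * (1 + s) ^ N * Real.exp (γ * s)) :=
          (hdecay _ (sub_nonpos.mpr hs.1.le) _).trans (by gcongr; exact hψ s hs0)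
      _ ≤ c * Real.exp (ρ₁ * (t - s)) *
            (C * (c' * (1 + t) ^ N * Real.exp ((ρ₁ - γ) / 2 * (s - t))) * Real.exp (γ * s)) := by
          gcongr; exact hc' t ht s hs.1.le
      _ = c * C * c' * (1 + t) ^ N * Real.exp (ρ₁ * (t - s) + ε * (s - t) + γ * s) := by
          rw [Real.exp_add, Real.exp_add]; ring
      _ = K * Real.exp (-(ε * (s - t))) := by
          simp only [K, ε, mul_assoc, ← Real.exp_add]; ring_nf
  calc ‖∫ s in t..T, NormedSpace.exp ((t - s) • A) (E (ψ s))‖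
      ≤ ∫ s in t..T, K * Real.exp (-(ε * (s - t))) :=
        intervalIntegral.norm_integral_le_of_norm_le hT (ae_of_all _ hbound)
          ((by fun_prop : Continuous fun s => K * Real.exp (-(ε * (s - t)))).intervalIntegrable
            t T)
    _ ≤ K * (1 / ε) := by
        rw [intervalIntegral.integral_const_mul]
        exact mul_le_mul_of_nonneg_left (integral_exp_neg_mul_sub_le hε) (by positivity)
    _ = c * C * c' / ε * (1 + t) ^ N * Real.exp (γ * t) := by ring

theorem exists_forall_norm_apply_le_of_hasDerivAt [CompleteSpace X] (hc : 0 ≤ c) (hC : 0 ≤ C)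
    (hdecay : ∀ u ≤ (0 : ℝ), ∀ v, ‖NormedSpace.exp (u • A) (E v)‖ ≤ c * Real.exp (ρ₁ * u) * ‖v‖)
    (hEA : ∀ x, E (A x) = A (E x)) {Φ ψ : ℝ → X} {ρ γ : ℝ} (hρ : ρ < ρ₁) (hγ : γ < ρ₁)
    (hΦ' : ∀ t ≥ (0 : ℝ), HasDerivAt Φ (A (Φ t) + ψ t) t) (hψc : ContinuousOn ψ (Ici 0))
    (hΦ : ∀ t ≥ (0 : ℝ), ‖Φ t‖ ≤ C * (1 + t) ^ N * Real.exp (ρ * t))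
    (hψ : ∀ t ≥ (0 : ℝ), ‖ψ t‖ ≤ C * (1 + t) ^ N * Real.exp (γ * t)) :
    ∃ K, ∀ t ≥ (0 : ℝ), ‖E (Φ t)‖ ≤ K * (1 + t) ^ N * Real.exp (γ * t) := by
  obtain ⟨K, hK⟩ := exists_forall_norm_integral_exp_smul_apply_le hc hC hdecay hγ hψ
  refine ⟨K, fun t ht => ?_⟩
  have hlim : Tendsto (fun T => ‖NormedSpace.exp ((t - T) • A) (E (Φ T))‖ +
      K * (1 + t) ^ N * Real.exp (γ * t)) atTop (𝓝 (K * (1 + t) ^ N * Real.exp (γ * t))) := by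
    simpa using (tendsto_exp_smul_apply_atTop_zero hc hC hdecay hρ hΦ t).norm.add_const
      (K * (1 + t) ^ N * Real.exp (γ * t))
  refine ge_of_tendsto hlim ((eventually_ge_atTop t).mono fun T hT => ?_)
  have hEΦ' (s : ℝ) (hs : s ∈ Icc t T) :
      HasDerivAt (fun s => E (Φ s)) (A (E (Φ s)) + E (ψ s)) s := by
    refine ((E.restrictScalars ℝ).hasFDerivAt.comp_hasDerivAt s
      (hΦ' s (ht.trans hs.1))).congr_deriv ?_
    simp [hEA]
  rw [eq_exp_smul_apply_sub_integral_of_hasDerivAt hT hEΦ'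
    (E.continuous.comp_continuousOn (hψc.mono fun s hs => ht.trans hs.1))]
  exact (norm_sub_le _ _).trans (add_le_add le_rfl (hK t ht T hT))

end Decay

end Flow

/-- Bound on the part of a tempered solution above the critical line.  Let `E` be the spectral
projection of `A` associated to the eigenvalues `μ` with `Re μ > ρ`.  If `Φ' = AΦ + ψ` on
`[0,∞)` with `‖Φ(t)‖ ≤ C (1+t)^N e^{ρt}` and `‖ψ(t)‖ ≤ C (1+t)^N e^{(ρ+β)t}` (`β < 0`), then
`‖E Φ(t)‖ ≤ C' (1+t)^{N + dim U + 1} e^{(ρ+β)t}` for all `t ≥ 0`. -/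
theorem projected_solution_above_bound
    (U : Type*) [NormedAddCommGroup U] [NormedSpace ℂ U] [FiniteDimensional ℂ U]
    (A : U →L[ℂ] U) (ρ β : ℝ) (hβ : β < 0) (N : ℕ) (C : ℝ) (hC : 0 ≤ C)
    (E : U →L[ℂ] U)
    (hE1 : ∀ v ∈ ⨆ μ ∈ {μ : ℂ | μ ∈ spectrum ℂ A ∧ ρ < μ.re},
        LinearMap.ker ((((A - μ • (1 : U →L[ℂ] U)) ^ (Module.finrank ℂ U) : U →L[ℂ] U) : U →ₗ[ℂ] U)), E v = v)
    (hE0 : ∀ v ∈ ⨆ μ ∈ {μ : ℂ | μ ∈ spectrum ℂ A ∧ ¬ ρ < μ.re},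
        LinearMap.ker ((((A - μ • (1 : U →L[ℂ] U)) ^ (Module.finrank ℂ U) : U →L[ℂ] U) : U →ₗ[ℂ] U)), E v = 0)
    (Φ ψ : ℝ → U)
    (hΦ : ∀ t ≥ (0:ℝ), HasDerivAt Φ (A (Φ t) + ψ t) t)
    (hψc : ContinuousOn ψ (Set.Ici 0))
    (hΦbound : ∀ t ≥ (0:ℝ), ‖Φ t‖ ≤ C * (1 + t) ^ N * Real.exp (ρ * t))
    (hψbound : ∀ t ≥ (0:ℝ), ‖ψ t‖ ≤ C * (1 + t) ^ N * Real.exp ((ρ + β) * t)) :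
    ∃ C' > (0:ℝ), ∀ t ≥ (0:ℝ),
      ‖E (Φ t)‖ ≤ C' * (1 + t) ^ (N + Module.finrank ℂ U + 1)
        * Real.exp ((ρ + β) * t) := by
  simp only [ker_pow_sub_smul_one_eq_maxGenEigenspace] at hE1 hE0
  have := FiniteDimensional.complete ℂ U
  have hspec : spectrum ℂ A = spectrum ℂ (A : Module.End ℂ U) := ContinuousLinearMap.spectrum_eq
  have hV := sup_biSup_maxGenEigenspace_eq_top (A : Module.End ℂ U)
    (S := {μ | μ ∈ spectrum ℂ A ∧ ρ < μ.re}) (T := {μ | μ ∈ spectrum ℂ A ∧ ¬ ρ < μ.re})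
    fun μ hμ => (em (ρ < μ.re)).imp (⟨hspec ▸ hμ.mem_spectrum, ·⟩) (⟨hspec ▸ hμ.mem_spectrum, ·⟩)
  have hEA : Commute (E : Module.End ℂ U) A := commute_of_eq_self_of_eq_zero hV hE1 hE0
    (biSup_maxGenEigenspace_le_comap _ _) (biSup_maxGenEigenspace_le_comap _ _)
  obtain ⟨ρ₁, hρ₁, hlt⟩ := ((hspec ▸ Module.End.finite_spectrum _).subset
    fun μ (hμ : μ ∈ spectrum ℂ A ∧ ρ < μ.re) => hμ.1).exists_gt_forall_lt fun μ hμ => hμ.2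
  obtain ⟨c, hc, hdecay⟩ := exists_forall_norm_exp_smul_apply_le fun v =>
    iSup₂_le (fun μ hμ => maxGenEigenspace_le_expDecaySubmodule (hlt μ hμ))
      (apply_mem_of_eq_self_of_eq_zero hV hE1 hE0 v)
  obtain ⟨K, hK⟩ := exists_forall_norm_apply_le_of_hasDerivAt hc hC hdecay
    (LinearMap.congr_fun hEA) hρ₁ (show ρ + β < ρ₁ by linarith) hΦ hψc hΦbound hψbound
  refine ⟨max K 1, by positivity, fun t ht => (hK t ht).trans ?_⟩
  gcongr ?_ * ?_ * _
  · exact le_max_left _ _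
  · exact pow_le_pow_right₀ (by linarith) (by omega)
end
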